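/- Let k ≥ 1, ε ≥ 0, and m > k. Suppose there exists an ε-LDP-Rec mechanism with input alphabet [k], output alphabet a finite set Y, and key alphabet U of size m with key distribution q (full support). Then there exists an ε-LDP-Rec mechanism with input alphabet [k], output alphabet of size k, and key alphabet of size k with key distribution q′ such that H(q′) ≤ H(q). -/

import Mathlib

open Finset

/-- Shannon entropy of a function on a finite type (natural log, `0 log 0 = 0`). -/
noncomputable def Hent {S : Type*} [Fintype S] (q : S → ℝ) : ℝ :=
  -∑ s, q s * Real.log (q s)

/-- `q` is a probability distribution on the finite type `S`. -/
def IsDist {S : Type*} [Fintype S] (q : S → ℝ) : Prop :=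
  (∀ s, 0 ≤ q s) ∧ ∑ s, q s = 1

open Real

/-!
Let `E = exp ε` and let `ρ₀` minimise entropy over the compact set of distributions on `[k]`
whose ratios are bounded by `E`. The cyclic mechanism `(x, u) ↦ x + u` with key distribution `ρ₀`
is an `ε`-LDP-Rec mechanism whose output probabilities are the values of `ρ₀`.

To compare with a given mechanism with kernel `p x y`, normalise each column `p · y`: by the LDP
condition it lies in the ratio-bounded set, so `Hent ρ₀` is at most its entropy, and since the
column mass `s_y` is at most `1` (reconstructability) this gives
`s_y * Hent ρ₀ ≤ ∑ₓ negMulLog (p x y)`. Summing over `y` gives `k * Hent ρ₀` on the left, while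
on the right each row `p x ·` is a coarsening of `q`, whose entropy is at most `Hent q`.
-/

lemma Hent_eq_sum_negMulLog {S : Type*} [Fintype S] (q : S → ℝ) :
    Hent q = ∑ s, negMulLog (q s) := by
  simp [Hent, negMulLog, sum_neg_distrib]

lemma continuous_Hent {S : Type*} [Fintype S] : Continuous (Hent : (S → ℝ) → ℝ) := by
  simp_rw [funext Hent_eq_sum_negMulLog]
  fun_prop

lemma negMulLog_sum_le {α : Type*} (s : Finset α) {g : α → ℝ} (hg : ∀ a ∈ s, 0 ≤ g a) :
    negMulLog (∑ a ∈ s, g a) ≤ ∑ a ∈ s, negMulLog (g a) := by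
  simp only [negMulLog, neg_mul, sum_mul, sum_neg_distrib, neg_le_neg_iff]
  refine sum_le_sum fun a ha => ?_
  rcases (hg a ha).eq_or_lt with h | h
  · simp [← h]
  · exact mul_le_mul_of_nonneg_left (log_le_log h (single_le_sum hg ha)) h.le

lemma mul_Hent_div_sum {ι : Type*} [Fintype ι] {p : ι → ℝ} (hp : ∑ i, p i ≠ 0) :
    (∑ i, p i) * Hent (fun i => p i / ∑ j, p j) = ∑ i, negMulLog (p i) - negMulLog (∑ i, p i) := by
  simp only [Hent_eq_sum_negMulLog, div_eq_mul_inv, negMulLog_mul, sum_add_distrib,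
    ← sum_mul, ← mul_sum]
  simp only [negMulLog, log_inv]
  field_simp
  ring

def ratioSimplex (ι : Type*) [Fintype ι] (E : ℝ) : Set (ι → ℝ) :=
  stdSimplex ℝ ι ∩ {ρ | ∀ i j, ρ i ≤ E * ρ j}

section ratioSimplex

variable {ι : Type*} [Fintype ι] {E : ℝ}

lemma pos_of_mem_ratioSimplex {ρ : ι → ℝ} (hρ : ρ ∈ ratioSimplex ι E) (i : ι) : 0 < ρ i := by
  by_contra! h
  have hzero : ∀ j, ρ j ≤ 0 := fun j => by
    simpa [le_antisymm h (hρ.1.1 i)] using hρ.2 j i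
  linarith [hρ.1.2, sum_nonpos fun j (_ : j ∈ univ) => hzero j]

lemma ratioSimplex_nonempty [Nonempty ι] (hE : 1 ≤ E) : (ratioSimplex ι E).Nonempty := by
  have hcard : (0 : ℝ) < Fintype.card ι := by exact_mod_cast Fintype.card_pos
  refine ⟨fun _ => (Fintype.card ι : ℝ)⁻¹, ⟨fun _ => by positivity, ?_⟩, fun _ _ => ?_⟩
  · simp [hcard.ne']
  · exact le_mul_of_one_le_left (by positivity) hE

lemma isCompact_ratioSimplex : IsCompact (ratioSimplex ι E) := by
  refine (isCompact_stdSimplex ℝ ι).inter_right ?_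
  simp only [Set.ofPred_forall]
  exact isClosed_iInter fun i => isClosed_iInter fun j =>
    isClosed_le (continuous_apply i) (continuous_const.mul (continuous_apply j))

lemma exists_isMinOn_Hent_ratioSimplex [Nonempty ι] (hE : 1 ≤ E) :
    ∃ ρ₀ ∈ ratioSimplex ι E, IsMinOn Hent (ratioSimplex ι E) ρ₀ :=
  isCompact_ratioSimplex.exists_isMinOn (ratioSimplex_nonempty hE) continuous_Hent.continuousOn

lemma mul_Hent_le_sum_negMulLog {ρ₀ : ι → ℝ} (hmin : IsMinOn Hent (ratioSimplex ι E) ρ₀)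
    {p : ι → ℝ} (hp : ∀ i, 0 ≤ p i) (hsum : ∑ i, p i ≤ 1) (hratio : ∀ i j, p i ≤ E * p j) :
    (∑ i, p i) * Hent ρ₀ ≤ ∑ i, negMulLog (p i) := by
  set s := ∑ i, p i
  rcases (sum_nonneg fun i (_ : i ∈ univ) => hp i).eq_or_lt with hs0 | hs0
  · have hzero : ∀ i, p i = 0 := fun i =>
      (sum_eq_zero_iff_of_nonneg fun i _ => hp i).mp hs0.symm i (mem_univ i)
    simp [s, hzero]
  have hmem : (fun i => p i / s) ∈ ratioSimplex ι E := by
    refine ⟨⟨fun i => div_nonneg (hp i) hs0.le, ?_⟩, fun i j => ?_⟩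
    · rw [← sum_div, div_self hs0.ne']
    · rw [mul_div_assoc']
      exact div_le_div_of_nonneg_right (hratio i j) hs0.le
  calc s * Hent ρ₀ ≤ s * Hent (fun i => p i / s) :=
        mul_le_mul_of_nonneg_left (isMinOn_iff.mp hmin _ hmem) hs0.le
    _ = ∑ i, negMulLog (p i) - negMulLog s := mul_Hent_div_sum hs0.ne'
    _ ≤ ∑ i, negMulLog (p i) := sub_le_self _ (negMulLog_nonneg hs0.le hsum)

end ratioSimplex

/-- The channel `Q(y | x)` of the mechanism `(f, q)`. -/
def inducedKernel {X U Y : Type*} [Fintype U] [DecidableEq Y] (f : X → U → Y) (q : U → ℝ)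
    (x : X) (y : Y) : ℝ :=
  ∑ u ∈ univ.filter (fun u => f x u = y), q u

section inducedKernel

variable {X U Y : Type*} [Fintype U] [DecidableEq Y] {f : X → U → Y} {q : U → ℝ}

lemma inducedKernel_nonneg (hq : ∀ u, 0 ≤ q u) (x : X) (y : Y) : 0 ≤ inducedKernel f q x y :=
  sum_nonneg fun u _ => hq u

lemma sum_inducedKernel_right [Fintype Y] (x : X) : ∑ y, inducedKernel f q x y = ∑ u, q u :=
  sum_fiberwise univ (f x) q

lemma sum_negMulLog_inducedKernel_le [Fintype Y] (hq : ∀ u, 0 ≤ q u) (x : X) :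
    ∑ y, negMulLog (inducedKernel f q x y) ≤ Hent q := by
  rw [Hent_eq_sum_negMulLog, ← sum_fiberwise univ (f x) fun u => negMulLog (q u)]
  exact sum_le_sum fun y _ => negMulLog_sum_le _ fun u _ => hq u

/-- Reconstructability makes the fibres `{u | f x u = y}`, `x ∈ X`, pairwise disjoint. -/
lemma sum_inducedKernel_left_le [Fintype X] (hq : ∀ u, 0 ≤ q u)
    (hrec : ∀ u, Function.Injective (fun x => f x u)) (y : Y) :
    ∑ x, inducedKernel f q x y ≤ ∑ u, q u := by
  classical
  have hdisj : ((univ : Finset X) : Set X).PairwiseDisjoint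
      (fun x => univ.filter (fun u => f x u = y)) := by
    intro x _ x' _ hxx'
    simp only [Function.onFun, disjoint_left, mem_filter, mem_univ, true_and]
    exact fun u hx hx' => hxx' (hrec u (hx.trans hx'.symm))
  unfold inducedKernel
  rw [← sum_biUnion hdisj]
  exact sum_le_sum_of_subset_of_nonneg (subset_univ _) fun u _ _ => hq u

lemma inducedKernel_add {G : Type*} [AddGroup G] [Fintype G] [DecidableEq G] (ρ : G → ℝ)
    (x y : G) : inducedKernel (fun x u => x + u) ρ x y = ρ (-x + y) := by
  simp [inducedKernel, sum_filter, ← eq_neg_add_iff_add_eq]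

end inducedKernel

lemma Hent_le_of_isMinOn_ratioSimplex {X U Y : Type*} [Fintype X] [Nonempty X] [Fintype U]
    [Fintype Y] [DecidableEq Y] {f : X → U → Y} {q : U → ℝ} (hq : IsDist q)
    (hrec : ∀ u, Function.Injective (fun x => f x u)) {E : ℝ}
    (hLDP : ∀ x x' y, inducedKernel f q x y ≤ E * inducedKernel f q x' y)
    {ρ₀ : X → ℝ} (hmin : IsMinOn Hent (ratioSimplex X E) ρ₀) :
    Hent ρ₀ ≤ Hent q := by
  set p := inducedKernel f q
  have hmass : ∑ y, ∑ x, p x y = Fintype.card X := by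
    rw [sum_comm]
    simp [p, sum_inducedKernel_right, hq.2]
  have hcard : (0 : ℝ) < Fintype.card X := by exact_mod_cast Fintype.card_pos
  refine le_of_mul_le_mul_left ?_ hcard
  calc (Fintype.card X : ℝ) * Hent ρ₀ = ∑ y, (∑ x, p x y) * Hent ρ₀ := by
        rw [← sum_mul, hmass]
    _ ≤ ∑ y, ∑ x, negMulLog (p x y) := sum_le_sum fun y _ =>
        mul_Hent_le_sum_negMulLog hmin (fun x => inducedKernel_nonneg hq.1 x y)
          ((sum_inducedKernel_left_le hq.1 hrec y).trans hq.2.le) (fun x x' => hLDP x x' y)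
    _ = ∑ x, ∑ y, negMulLog (p x y) := sum_comm
    _ ≤ ∑ _x : X, Hent q := sum_le_sum fun x _ => sum_negMulLog_inducedKernel_le hq.1 x
    _ = Fintype.card X * Hent q := by simp

theorem stmt12_general (k : ℕ) (hk : 1 ≤ k) (ε : ℝ) (hε : 0 ≤ ε)
    (U Y : Type*) [Fintype U] [Fintype Y] [DecidableEq Y]
    (q : U → ℝ) (hq : IsDist q)
    (f : Fin k → U → Y)
    (hLDP : ∀ x x' y, (∑ u ∈ Finset.univ.filter (fun u => f x u = y), q u) ≤
      Real.exp ε * ∑ u ∈ Finset.univ.filter (fun u => f x' u = y), q u)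
    (hrec : ∀ u, Function.Injective (fun x => f x u)) :
    ∃ (q' : Fin k → ℝ) (f' : Fin k → Fin k → Fin k),
      IsDist q' ∧ (∀ u, 0 < q' u) ∧
      (∀ u, Function.Injective (fun x => f' x u)) ∧
      (∀ x x' y, (∑ u ∈ Finset.univ.filter (fun u => f' x u = y), q' u) ≤
        Real.exp ε * ∑ u ∈ Finset.univ.filter (fun u => f' x' u = y), q' u) ∧
      Hent q' ≤ Hent q := by
  have : NeZero k := ⟨by omega⟩
  obtain ⟨ρ₀, hρ₀, hmin⟩ := exists_isMinOn_Hent_ratioSimplex (ι := Fin k) (one_le_exp hε)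
  refine ⟨ρ₀, fun x u => x + u, hρ₀.1, pos_of_mem_ratioSimplex hρ₀,
    fun u => add_left_injective u, fun x x' y => ?_,
    Hent_le_of_isMinOn_ratioSimplex hq hrec hLDP hmin⟩
  change inducedKernel (fun x u : Fin k => x + u) ρ₀ x y ≤
    exp ε * inducedKernel (fun x u : Fin k => x + u) ρ₀ x' y
  rw [inducedKernel_add, inducedKernel_add]
  exact hρ₀.2 _ _

/-- **Lemma 5.2 of the paper:** if an `ε`-LDP-Rec mechanism on input alphabet `[k]` uses a
key of size `m > k`, then there is an `ε`-LDP-Rec mechanism on `[k]` with key and output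
alphabets of size `k` whose key entropy is no larger. -/
theorem stmt12 (k m : ℕ) (hk : 1 ≤ k) (hm : k < m) (ε : ℝ) (hε : 0 ≤ ε)
    (U Y : Type*) [Fintype U] [Fintype Y] [DecidableEq Y]
    (hU : Fintype.card U = m)
    (q : U → ℝ) (hq : IsDist q) (hqpos : ∀ u, 0 < q u)
    (f : Fin k → U → Y)
    (hLDP : ∀ x x' y, (∑ u ∈ Finset.univ.filter (fun u => f x u = y), q u) ≤
      Real.exp ε * ∑ u ∈ Finset.univ.filter (fun u => f x' u = y), q u)
    (hrec : ∀ u, Function.Injective (fun x => f x u)) :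
    ∃ (q' : Fin k → ℝ) (f' : Fin k → Fin k → Fin k),
      IsDist q' ∧ (∀ u, 0 < q' u) ∧
      (∀ u, Function.Injective (fun x => f' x u)) ∧
      (∀ x x' y, (∑ u ∈ Finset.univ.filter (fun u => f' x u = y), q' u) ≤
        Real.exp ε * ∑ u ∈ Finset.univ.filter (fun u => f' x' u = y), q' u) ∧
      Hent q' ≤ Hent q :=
  stmt12_general k hk ε hε U Y q hq f hLDP hrec
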